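/- Let A be a unital C*-algebra with T(A) ≠ ∅ and T(A) metrizable (e.g., A separable); fix a metric dist on T(A) inducing the weak-* topology. Let a ∈ M_k(A) be positive and let Y be a compact subset of T(A). Then for all δ > 0 and δ' > 0 there exist ε > 0 and an open neighborhood U of Y in T(A) such that for every γ ∈ U there exist τ, τ' ∈ Y with dist(τ, γ) < δ', dist(τ', γ) < δ', and d_τ(a) − δ < d_γ((a − ε)₊) < d_{τ'}(a) + δ. -/

import Mathlib

open Filter Set Topology MeasureTheory
open scoped ComplexOrder Matrix.Norms.L2Operator

noncomputable section

universe u v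

/-- A tracial state on a unital C*-algebra `A`, viewed as an element of the weak-* dual:
a positive linear functional `τ` with `τ 1 = 1` and `τ (a b) = τ (b a)`. -/
def IsTracialState (A : Type u) [CStarAlgebra A] (τ : WeakDual ℂ A) : Prop :=
  τ 1 = 1 ∧ (∀ a : A, 0 ≤ τ (star a * a)) ∧ ∀ a b : A, τ (a * b) = τ (b * a)

/-- The tracial state space `T(A)`, as a subset of the weak-* dual (so that it carries the
weak-* topology). -/
def TS (A : Type u) [CStarAlgebra A] : Set (WeakDual ℂ A) := {τ | IsTracialState A τ}

/-- `d_φ(a) = sup_{n ≥ 1} φ(f_{1/n}(a))`, where `f_η(t) = min (t/η) 1`, for a (positive)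
linear functional `φ` on a unital C*-algebra `B`. -/
noncomputable def dRank {B : Type v} [CStarAlgebra B] (φ : B → ℂ) (a : B) : ℝ :=
  ⨆ n : ℕ, (φ (cfc (fun t : ℝ => min (((n : ℝ) + 1) * t) 1) a)).re

/-- The matrix algebra `M_k(A)` (as a star `ℂ`-algebra). -/
abbrev Mat (k : ℕ) (A : Type u) : Type u := Matrix (Fin k) (Fin k) A

/-- The unnormalized trace `τ_k((a_ij)) = ∑ i, τ (a_ii)` on `M_k(A)`, transported to a
C*-algebra `B` which realizes `M_k(A)` via a star-algebra isomorphism `e`. -/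
noncomputable def matTr {A : Type u} [CStarAlgebra A] {k : ℕ} {B : Type v} [CStarAlgebra B]
    (τ : WeakDual ℂ A) (e : Mat k A ≃⋆ₐ[ℂ] B) : B → ℂ :=
  fun b => ∑ i, τ (e.symm b i i)

/-- `(a - ε)₊`, via the continuous functional calculus. -/
noncomputable def cutMinus {B : Type v} [CStarAlgebra B] (a : B) (ε : ℝ) : B :=
  cfc (fun t : ℝ => max (t - ε) 0) a

/-- `f_η(a)` where `f_η(t) = min (t/η) 1`, via the continuous functional calculus. -/
noncomputable def fEtaCFC {B : Type v} [CStarAlgebra B] (η : ℝ) (a : B) : B :=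
  cfc (fun t : ℝ => min (t / η) 1) a

/-- `a^{1/2}`, via the continuous functional calculus. -/
noncomputable def sqrtCFC {B : Type v} [CStarAlgebra B] (a : B) : B :=
  cfc (fun t : ℝ => Real.sqrt t) a

/-- Cuntz subequivalence `a ≾ b` in a C*-algebra `B`. -/
def CuntzBelow {B : Type v} [CStarAlgebra B] (a b : B) : Prop :=
  ∃ x : ℕ → B, Tendsto (fun n => ‖x n * b * star (x n) - a‖) atTop (𝓝 0)

/-- The upper-left-corner embedding of `M_k(A)` into `M_m(A)`. -/
def matInc {A : Type u} [Zero A] {k m : ℕ} (M : Mat k A) : Mat m A :=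
  Matrix.of fun i j => if h : (i : ℕ) < k ∧ (j : ℕ) < k then M ⟨i.1, h.1⟩ ⟨j.1, h.2⟩ else 0

/-- Strict comparison of positive elements: for positive `a ∈ M_k(A)`, `b ∈ M_l(A)`,
if `d_τ(a) < d_τ(b)` for every tracial state `τ`, then `a ≾ b` in `M_{max k l}(A)`
(realized as a C*-algebra `B` via a star-algebra isomorphism). -/
def StrictComparison (A : Type u) [CStarAlgebra A] : Prop :=
  ∀ (k l : ℕ) (B : Type u) (_ : CStarAlgebra B) (_ : PartialOrder B) (_ : StarOrderedRing B)
    (e : Mat (max k l) A ≃⋆ₐ[ℂ] B) (a : Mat k A) (b : Mat l A),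
    0 ≤ e (matInc a) → 0 ≤ e (matInc b) →
    (∀ τ ∈ TS A, dRank (matTr τ e) (e (matInc a)) < dRank (matTr τ e) (e (matInc b))) →
    CuntzBelow (e (matInc a)) (e (matInc b))

/-- The extreme boundary `∂_e T(A)` of the tracial state space. -/
def extTS (A : Type u) [CStarAlgebra A] : Set (WeakDual ℂ A) :=
  Set.extremePoints ℝ (TS A)

/-- A C*-algebra is simple if its only closed two-sided ideals are `0` and the whole algebra. -/
def IsSimpleCStar (A : Type u) [CStarAlgebra A] : Prop :=
  ∀ I : TwoSidedIdeal A, IsClosed (I : Set A) → (I : Set A) = {0} ∨ (I : Set A) = Set.univ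

/-- `F_σ` subsets: countable unions of closed sets. -/
def IsFSigmaIn {E : Type v} [TopologicalSpace E] (X : Set E) : Prop :=
  ∃ C : ℕ → Set E, (∀ n, IsClosed (C n)) ∧ X = ⋃ n, C n

/-- Covering dimension at most `m`: every finite open cover admits a finite open refinement
in which every point lies in at most `m + 1` members. -/
def CovDimLE (X : Type v) [TopologicalSpace X] (m : ℕ) : Prop :=
  ∀ (n : ℕ) (U : Fin n → Set X), (∀ i, IsOpen (U i)) → (⋃ i, U i) = univ →
    ∃ (p : ℕ) (V : Fin p → Set X), (∀ j, IsOpen (V j)) ∧ (⋃ j, V j) = univ ∧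
      (∀ j, ∃ i, V j ⊆ U i) ∧ ∀ x : X, {j | x ∈ V j}.ncard ≤ m + 1

/-- Zero-dimensionality: the topology has a basis of clopen sets. -/
def ZeroDim (X : Type v) [TopologicalSpace X] : Prop :=
  ∀ (x : X) (U : Set X), IsOpen U → x ∈ U → ∃ V : Set X, IsClopen V ∧ x ∈ V ∧ V ⊆ U

/-- Real-valued functions that are affine on `T(A)`. -/
def AffineOnTS {A : Type u} [CStarAlgebra A] (f : WeakDual ℂ A → ℝ) : Prop :=
  ∀ σ ∈ TS A, ∀ σ' ∈ TS A, ∀ t : ℝ, 0 ≤ t → t ≤ 1 →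
    f (t • σ + (1 - t) • σ') = t * f σ + (1 - t) * f σ'

/-- A Borel measure `μ` represents `τ` if `f τ = ∫ f dμ` for every weak-* continuous
affine real-valued function `f` on `T(A)`. -/
def Represents {A : Type u} [CStarAlgebra A] [MeasurableSpace (WeakDual ℂ A)]
    (μ : Measure (WeakDual ℂ A)) (τ : WeakDual ℂ A) : Prop :=
  ∀ f : WeakDual ℂ A → ℝ, ContinuousOn f (TS A) → AffineOnTS f → f τ = ∫ σ, f σ ∂μ

/-- A metric space structure is compatible if it induces the given topology. -/
def CompatibleMetric (X : Type v) [t : TopologicalSpace X] (m : MetricSpace X) : Prop :=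
  m.toUniformSpace.toTopologicalSpace = t

/-- Positivity of a matrix over a star ring: `M = Nᴴ * N` for some `N`. -/
def MatPos {R : Type v} [Ring R] [StarRing R] {n : ℕ} (M : Matrix (Fin n) (Fin n) R) : Prop :=
  ∃ N : Matrix (Fin n) (Fin n) R, M = N.conjTranspose * N

/-- Completely positive `ℂ`-linear maps: all matrix amplifications preserve positivity. -/
def IsCP {R : Type u} {S : Type v} [Ring R] [StarRing R] [Algebra ℂ R]
    [Ring S] [StarRing S] [Algebra ℂ S] (φ : R →ₗ[ℂ] S) : Prop :=
  ∀ (n : ℕ) (M : Matrix (Fin n) (Fin n) R), MatPos M → MatPos (M.map ⇑φ)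

/-- Completely positive contractive (cpc) maps. -/
def IsCPC {R : Type u} {S : Type v} [NormedRing R] [StarRing R] [NormedAlgebra ℂ R]
    [NormedRing S] [StarRing S] [NormedAlgebra ℂ S] (φ : R →ₗ[ℂ] S) : Prop :=
  IsCP φ ∧ ∀ x : R, ‖φ x‖ ≤ ‖x‖

/-- cpc order zero maps from `M_k(ℂ)` (with the operator norm) into `S`:
cpc maps preserving orthogonality of positive elements. -/
def IsCPCOrderZero {S : Type v} [NormedRing S] [StarRing S] [NormedAlgebra ℂ S] {k : ℕ}
    (φ : Matrix (Fin k) (Fin k) ℂ →ₗ[ℂ] S) : Prop :=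
  IsCPC φ ∧ ∀ x y : Matrix (Fin k) (Fin k) ℂ, x.PosSemidef → y.PosSemidef → x * y = 0 →
    φ x * φ y = 0

/-- Nuclearity, via the completely positive approximation property. -/
def IsNuclear (A : Type u) [CStarAlgebra A] : Prop :=
  ∀ (G : Finset A) (ε : ℝ), 0 < ε →
    ∃ (n : ℕ) (ψ : A →ₗ[ℂ] Matrix (Fin n) (Fin n) ℂ) (φ : Matrix (Fin n) (Fin n) ℂ →ₗ[ℂ] A),
      IsCPC ψ ∧ IsCPC φ ∧ ∀ a ∈ G, ‖φ (ψ a) - a‖ < ε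

/-!
`d_τ(a)` is the supremum of `τ(f_{1/(n+1)}(a))`, each a continuous function of `τ`. Since
`f_{1/(n+1)}` is `(n+1)`-Lipschitz, `d_γ((a-ε)₊) ≥ γ(f_{1/(n+1)}(a)) - k(n+1)ε`, so the lower
bound holds for `γ` near `τ` once `ε` is small compared with `1/(n+1)`; compactness of `Y` makes
`ε` uniform. For the upper bound, `d_γ((a-ε)₊) ≤ γ(f_ε(a))`, which is continuous in `γ`, and
`τ'(f_ε(a)) ≤ d_{τ'}(a)`.
-/

lemma min_mul_sub_le_min_mul_max_sub {c ε : ℝ} (hc : 0 ≤ c) (hε : 0 ≤ ε) (t : ℝ) :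
    min (c * t) 1 - c * ε ≤ min (c * max (t - ε) 0) 1 := by
  rcases le_total t ε with h | h
  · rw [max_eq_right (by linarith)]
    have : c * t ≤ c * ε := mul_le_mul_of_nonneg_left h hc
    simp only [mul_zero, min_eq_left zero_le_one]
    linarith [min_le_left (c * t) 1]
  · rw [max_eq_left (by linarith), mul_sub]
    have : 0 ≤ c * ε := mul_nonneg hc hε
    rcases min_cases (c * t) 1 with h1 | h1 <;> rcases min_cases (c * t - c * ε) 1 with h2 | h2 <;>
      linarith

lemma min_mul_max_sub_le_min_div {c ε t : ℝ} (hε : 0 < ε) (ht : 0 ≤ t) :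
    min (c * max (t - ε) 0) 1 ≤ min (t / ε) 1 := by
  rcases le_total t ε with h | h
  · rw [max_eq_right (by linarith), mul_zero]
    exact min_le_min (by positivity) le_rfl
  · rw [min_eq_right ((one_le_div hε).2 h)]
    exact min_le_right _ _

lemma cfc_comp_cutMinus {B : Type*} [CStarAlgebra B] {a : B} (ha : IsSelfAdjoint a) (ε : ℝ)
    {g : ℝ → ℝ} (hg : Continuous g) :
    cfc (fun t : ℝ => g (max (t - ε) 0)) a = cfc g (cutMinus a ε) :=
  cfc_comp' g (fun t : ℝ => max (t - ε) 0) a hg.continuousOn (by fun_prop) ha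

section PositiveFunctional

variable {B : Type*} [CStarAlgebra B] [PartialOrder B] (φ : B →ₚ[ℂ] ℂ)

lemma PositiveLinearMap.re_apply_mono : Monotone fun b => (φ b).re :=
  fun _ _ h => (Complex.le_def.1 (φ.monotone h)).1

lemma PositiveLinearMap.re_apply_algebraMap (r : ℝ) :
    (φ (algebraMap ℝ B r)).re = r * (φ 1).re := by
  rw [Algebra.algebraMap_eq_smul_one, ← algebraMap_smul ℂ r (1 : B), map_smul]
  simp

variable [StarOrderedRing B]

lemma re_cfc_le_dRank (a : B) (n : ℕ) :
    (φ (cfc (fun t : ℝ => min (((n : ℝ) + 1) * t) 1) a)).re ≤ dRank φ a := by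
  refine le_ciSup (f := fun n : ℕ => (φ (cfc (fun t : ℝ => min (((n : ℝ) + 1) * t) 1) a)).re)
    ⟨(φ 1).re, ?_⟩ n
  rintro _ ⟨m, rfl⟩
  exact φ.re_apply_mono (cfc_le_one _ a fun _ _ => min_le_right _ _)

lemma re_cfc_sub_le_dRank_cutMinus {a : B} (ha : IsSelfAdjoint a) (n : ℕ) {ε : ℝ} (hε : 0 ≤ ε) :
    (φ (cfc (fun t : ℝ => min (((n : ℝ) + 1) * t) 1) a)).re - ((n : ℝ) + 1) * ε * (φ 1).re
      ≤ dRank φ (cutMinus a ε) := by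
  set c : ℝ := (n : ℝ) + 1
  have hle : cfc (fun t : ℝ => min (c * t) 1) a - algebraMap ℝ B (c * ε)
      ≤ cfc (fun t : ℝ => min (c * max (t - ε) 0) 1) a := by
    rw [← cfc_const (c * ε) a, ← cfc_sub _ _ a]
    exact cfc_mono fun t _ => min_mul_sub_le_min_mul_max_sub (by positivity) hε t
  calc (φ (cfc (fun t : ℝ => min (c * t) 1) a)).re - c * ε * (φ 1).re
      = (φ (cfc (fun t : ℝ => min (c * t) 1) a - algebraMap ℝ B (c * ε))).re := by
        rw [map_sub, Complex.sub_re, φ.re_apply_algebraMap]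
    _ ≤ (φ (cfc (fun t : ℝ => min (c * t) 1) (cutMinus a ε))).re := by
        rw [← cfc_comp_cutMinus ha ε (by fun_prop)]
        exact φ.re_apply_mono hle
    _ ≤ dRank φ (cutMinus a ε) := re_cfc_le_dRank φ _ n

lemma dRank_cutMinus_le_re_fEtaCFC {a : B} (ha : 0 ≤ a) {ε : ℝ} (hε : 0 < ε) :
    dRank φ (cutMinus a ε) ≤ (φ (fEtaCFC ε a)).re := by
  refine ciSup_le fun n => ?_
  rw [← cfc_comp_cutMinus ha.isSelfAdjoint ε (by fun_prop)]
  refine φ.re_apply_mono (cfc_mono fun t ht => ?_)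
  exact min_mul_max_sub_le_min_div hε (spectrum_nonneg_of_nonneg ha ht)

lemma re_fEtaCFC_le_dRank {a : B} (ha : 0 ≤ a) {ε : ℝ} (hε : 0 < ε) :
    (φ (fEtaCFC ε a)).re ≤ dRank φ a := by
  refine le_trans (φ.re_apply_mono (cfc_mono fun t ht => ?_)) (re_cfc_le_dRank φ a ⌈1 / ε⌉₊)
  have ht0 : 0 ≤ t := spectrum_nonneg_of_nonneg ha ht
  have hceil : 1 / ε ≤ (⌈1 / ε⌉₊ : ℝ) + 1 :=
    (Nat.le_ceil _).trans (le_add_of_nonneg_right zero_le_one)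
  refine min_le_min ?_ le_rfl
  calc t / ε = 1 / ε * t := by ring
    _ ≤ _ := mul_le_mul_of_nonneg_right hceil ht0

end PositiveFunctional

section TracialStates

variable {A : Type*} [CStarAlgebra A] {k : ℕ} {B : Type*} [CStarAlgebra B] (e : Mat k A ≃⋆ₐ[ℂ] B)

lemma matTr_one {τ : WeakDual ℂ A} (hτ : τ 1 = 1) : matTr τ e 1 = k := by
  simp [matTr, hτ]

lemma continuous_matTr_apply (b : B) : Continuous fun γ : WeakDual ℂ A => matTr γ e b :=
  continuous_finsetSum _ fun _ _ => WeakDual.eval_continuous _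

variable [PartialOrder B] [StarOrderedRing B]

lemma matTr_nonneg {τ : WeakDual ℂ A} (hτ : ∀ x, 0 ≤ τ (star x * x)) {b : B} (hb : 0 ≤ b) :
    0 ≤ matTr τ e b := by
  obtain ⟨s, rfl⟩ : ∃ s : B, b = star s * s :=
    ⟨CFC.sqrt b, by rw [(CFC.sqrt_nonneg b).isSelfAdjoint.star_eq, CFC.sqrt_mul_sqrt_self b hb]⟩
  refine Finset.sum_nonneg fun i _ => ?_
  simp only [map_mul, map_star, Matrix.mul_apply, Matrix.star_apply, map_sum]
  exact Finset.sum_nonneg fun j _ => hτ _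

def matTrPositive {τ : WeakDual ℂ A} (hτ : ∀ x, 0 ≤ τ (star x * x)) : B →ₚ[ℂ] ℂ :=
  .mk₀ { toFun := matTr τ e
         map_add' := fun b c => by simp [matTr, Finset.sum_add_distrib]
         map_smul' := fun z b => by simp [matTr, Finset.mul_sum] }
    fun _ hb => matTr_nonneg e hτ hb

@[simp]
lemma coe_matTrPositive {τ : WeakDual ℂ A} (hτ : ∀ x, 0 ≤ τ (star x * x)) :
    ⇑(matTrPositive e hτ) = matTr τ e :=
  rfl

lemma eventually_lt_dRank_cutMinus {a : B} (ha : IsSelfAdjoint a) (τ : WeakDual ℂ A) {δ : ℝ}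
    (hδ : 0 < δ) :
    ∀ᶠ p : ℝ × WeakDual ℂ A in 𝓝[>] 0 ×ˢ 𝓝 τ,
      p.2 ∈ TS A → dRank (matTr τ e) a - δ < dRank (matTr p.2 e) (cutMinus a p.1) := by
  obtain ⟨n, hn⟩ : ∃ n : ℕ, dRank (matTr τ e) a - δ / 2
      < (matTr τ e (cfc (fun t : ℝ => min (((n : ℝ) + 1) * t) 1) a)).re :=
    exists_lt_of_lt_ciSup (sub_lt_self _ (half_pos hδ))
  have hclose :=
    ((Complex.continuous_re.comp (continuous_matTr_apply e _)).tendsto τ).eventually_const_lt hn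
  have hε : ∀ᶠ ε in 𝓝[>] (0 : ℝ), ((n : ℝ) + 1) * ε * k < δ / 2 := by
    refine Tendsto.eventually_lt_const (half_pos hδ) (tendsto_nhdsWithin_of_tendsto_nhds ?_)
    exact (by fun_prop : Continuous fun ε : ℝ => ((n : ℝ) + 1) * ε * k).tendsto' 0 0 (by simp)
  filter_upwards [(hε.and self_mem_nhdsWithin).prod_mk hclose] with ⟨ε, γ⟩ ⟨⟨hεδ, hε0⟩, hγτ⟩ hγ
  have hcut := re_cfc_sub_le_dRank_cutMinus (matTrPositive e hγ.2.1) ha n hε0.le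
  rw [coe_matTrPositive, matTr_one e hγ.1] at hcut
  simp only [Function.comp_apply, Complex.natCast_re] at hγτ hεδ hcut ⊢
  linarith

lemma eventually_dRank_cutMinus_lt {a : B} (ha : 0 ≤ a) {ε : ℝ} (hε : 0 < ε) {τ : WeakDual ℂ A}
    (hτ : τ ∈ TS A) {δ : ℝ} (hδ : 0 < δ) :
    ∀ᶠ γ in 𝓝 τ, γ ∈ TS A → dRank (matTr γ e) (cutMinus a ε) < dRank (matTr τ e) a + δ := by
  have hτε := re_fEtaCFC_le_dRank (matTrPositive e hτ.2.1) ha hε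
  rw [coe_matTrPositive] at hτε
  have hclose := ((Complex.continuous_re.comp (continuous_matTr_apply e _)).tendsto τ)
    |>.eventually_lt_const (lt_add_of_le_of_pos hτε hδ)
  filter_upwards [hclose] with γ hγτ hγ
  have hγε := dRank_cutMinus_le_re_fEtaCFC (matTrPositive e hγ.2.1) ha hε
  rw [coe_matTrPositive] at hγε
  exact hγε.trans_lt hγτ

end TracialStates

lemma CompatibleMetric.eventually_dist_lt {X : Type*} [TopologicalSpace X] {S : Set X}
    {m : MetricSpace S} (hm : CompatibleMetric S m) {x : X} (hx : x ∈ S) {r : ℝ} (hr : 0 < r) :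
    ∀ᶠ y in 𝓝 x, ∀ hy : y ∈ S, m.toPseudoMetricSpace.toDist.dist ⟨x, hx⟩ ⟨y, hy⟩ < r := by
  have hball : @Metric.ball S m.toPseudoMetricSpace ⟨x, hx⟩ r ∈ 𝓝 (⟨x, hx⟩ : S) := by
    rw [← hm]
    exact @Metric.ball_mem_nhds _ m.toPseudoMetricSpace _ _ hr
  obtain ⟨t, ht, hts⟩ := (nhds_subtype S ⟨x, hx⟩ ▸ hball :)
  filter_upwards [ht] with y hy hyS
  rw [m.toPseudoMetricSpace.dist_comm]
  exact hts hy

theorem stmt_5_general {A : Type u} [CStarAlgebra A]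
    (m : MetricSpace ↥(TS A)) (hm : CompatibleMetric ↥(TS A) m)
    {k : ℕ} {B : Type v} [CStarAlgebra B] [PartialOrder B] [StarOrderedRing B]
    (e : Mat k A ≃⋆ₐ[ℂ] B) (a : B) (ha : 0 ≤ a)
    {Y : Set (WeakDual ℂ A)} (hYT : Y ⊆ TS A) (hYcomp : IsCompact Y)
    {δ δ' : ℝ} (hδ : 0 < δ) (hδ' : 0 < δ') :
    ∃ ε : ℝ, 0 < ε ∧ ∃ U : Set (WeakDual ℂ A), IsOpen U ∧ Y ⊆ U ∧
      ∀ γ, ∀ hγ : γ ∈ U ∩ TS A,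
        ∃ τ, ∃ hτ : τ ∈ Y, ∃ τ', ∃ hτ' : τ' ∈ Y,
          m.toPseudoMetricSpace.toDist.dist ⟨τ, hYT hτ⟩ ⟨γ, hγ.2⟩ < δ' ∧
          m.toPseudoMetricSpace.toDist.dist ⟨τ', hYT hτ'⟩ ⟨γ, hγ.2⟩ < δ' ∧
          dRank (matTr τ e) a - δ < dRank (matTr γ e) (cutMinus a ε) ∧
          dRank (matTr γ e) (cutMinus a ε) < dRank (matTr τ' e) a + δ := by
  have hnear (τ : WeakDual ℂ A) (hτ : τ ∈ Y) := hm.eventually_dist_lt (hYT hτ) hδ'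
  have hlow : ∀ᶠ p in 𝓝[>] (0 : ℝ) ×ˢ 𝓝ˢ Y, ∀ hγ : p.2 ∈ TS A, ∃ τ, ∃ hτ : τ ∈ Y,
      m.toPseudoMetricSpace.toDist.dist ⟨τ, hYT hτ⟩ ⟨p.2, hγ⟩ < δ' ∧
      dRank (matTr τ e) a - δ < dRank (matTr p.2 e) (cutMinus a p.1) :=
    hYcomp.mem_prod_nhdsSet_of_forall fun τ hτ =>
      ((eventually_lt_dRank_cutMinus e ha.isSelfAdjoint τ hδ).and
        ((hnear τ hτ).prod_inr _)).mono fun _ h hγ => ⟨τ, hτ, h.2 hγ, h.1 hγ⟩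
  obtain ⟨ε, hlowε, hε⟩ := (hlow.curry.and self_mem_nhdsWithin).exists
  have hup : ∀ᶠ γ in 𝓝ˢ Y, ∀ hγ : γ ∈ TS A, ∃ τ', ∃ hτ' : τ' ∈ Y,
      m.toPseudoMetricSpace.toDist.dist ⟨τ', hYT hτ'⟩ ⟨γ, hγ⟩ < δ' ∧
      dRank (matTr γ e) (cutMinus a ε) < dRank (matTr τ' e) a + δ :=
    eventually_nhdsSet_iff_forall.2 fun τ' hτ' =>
      ((eventually_dRank_cutMinus_lt e ha hε (hYT hτ') hδ).and (hnear τ' hτ')).mono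
        fun _ h hγ => ⟨τ', hτ', h.2 hγ, h.1 hγ⟩
  obtain ⟨U, hUo, hYU, hU⟩ := mem_nhdsSet_iff_exists.1 (hlowε.and hup)
  refine ⟨ε, hε, U, hUo, hYU, fun γ hγ => ?_⟩
  obtain ⟨hlowγ, hupγ⟩ := hU hγ.1
  obtain ⟨τ, hτ, hτγ, hlt⟩ := hlowγ hγ.2
  obtain ⟨τ', hτ', hτ'γ, hlt'⟩ := hupγ hγ.2
  exact ⟨τ, hτ, τ', hτ', hτγ, hτ'γ, hlt, hlt'⟩

theorem stmt_5 {A : Type u} [CStarAlgebra A] (hTA : (TS A).Nonempty)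
    (m : MetricSpace ↥(TS A)) (hm : CompatibleMetric ↥(TS A) m)
    {k : ℕ} {B : Type v} [CStarAlgebra B] [PartialOrder B] [StarOrderedRing B]
    (e : Mat k A ≃⋆ₐ[ℂ] B) (a : B) (ha : 0 ≤ a)
    {Y : Set (WeakDual ℂ A)} (hYT : Y ⊆ TS A) (hYcomp : IsCompact Y)
    {δ δ' : ℝ} (hδ : 0 < δ) (hδ' : 0 < δ') :
    ∃ ε : ℝ, 0 < ε ∧ ∃ U : Set (WeakDual ℂ A), IsOpen U ∧ Y ⊆ U ∧
      ∀ γ, ∀ hγ : γ ∈ U ∩ TS A,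
        ∃ τ, ∃ hτ : τ ∈ Y, ∃ τ', ∃ hτ' : τ' ∈ Y,
          m.toPseudoMetricSpace.toDist.dist ⟨τ, hYT hτ⟩ ⟨γ, hγ.2⟩ < δ' ∧
          m.toPseudoMetricSpace.toDist.dist ⟨τ', hYT hτ'⟩ ⟨γ, hγ.2⟩ < δ' ∧
          dRank (matTr τ e) a - δ < dRank (matTr γ e) (cutMinus a ε) ∧
          dRank (matTr γ e) (cutMinus a ε) < dRank (matTr τ' e) a + δ :=
  stmt_5_general m hm e a ha hYT hYcomp hδ hδ'

end
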